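/- arXiv:2308.13186 — 2 statements merged into one kernel-verified Lean document; each statement's English description precedes it below -/
import Mathlib

section
/- Let U(R^e) denote the set of units of the ring R^e. Then U(R^e) ∩ R = C_m, where C_m = {c ∈ R : Kdim(R/cR) < m}. -/
set_option linter.unusedVariables false

/-- `devLE k A` : the deviation (in the Gabriel–Rentschler sense) of the
poset `A` is `≤ k` (for `k : ℕ`).  `devLE 0 A` says every descending chain
eventually stabilizes (DCC), and `devLE (k+1) A` says that in any descending
chain all but finitely many of the factor intervals have deviation `≤ k`. -/
def devLE : ℕ → (A : Type*) → [inst : Preorder A] → Prop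
  | 0, A, _ => ∀ f : ℕ → A, Antitone f → ∃ N, ∀ i, N ≤ i → f (i + 1) = f i
  | (k+1), A, _ => ∀ f : ℕ → A, Antitone f →
      ∃ N, ∀ i, N ≤ i → devLE k (Set.Icc (f (i + 1)) (f i))

/-- The Gabriel–Rentschler Krull dimension of the right `R`-module `M`
(a module over `Rᵐᵒᵖ`) is `≤ k` : the deviation of its submodule lattice is `≤ k`. -/
def kdimLE (R M : Type*) [Ring R] [AddCommGroup M] [Module Rᵐᵒᵖ M] (k : ℕ) : Prop :=
  devLE k (Submodule Rᵐᵒᵖ M)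

/-- `c` is a regular element of `R` (neither a left nor a right zero divisor). -/
def regElem (R : Type*) [Ring R] (c : R) : Prop :=
  (∀ x : R, c * x = 0 → x = 0) ∧ (∀ x : R, x * c = 0 → x = 0)

/-- `C_m = {c ∈ R | Kdim(R/cR) < m}` (for `0 < m`, `Kdim < m` is `Kdim ≤ m-1`). -/
def rCm (R : Type*) [Ring R] (m : ℕ) : Set R :=
  {c | kdimLE R (R ⧸ Submodule.span Rᵐᵒᵖ ({c} : Set R)) (m - 1)}

/-- The m-Gabriel filter `g = {right ideals I | Kdim(R/I) < m}`. -/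
def gFilt (R : Type*) [Ring R] (m : ℕ) : Set (Submodule Rᵐᵒᵖ R) :=
  {I | kdimLE R (R ⧸ I) (m - 1)}

/-- A right ideal `P` is a (two-sided) prime ideal of `R`. -/
def isTwoSidedPrime (R : Type*) [Ring R] (P : Submodule Rᵐᵒᵖ R) : Prop :=
  (∀ a ∈ P, ∀ r : R, r * a ∈ P) ∧ P ≠ ⊤ ∧
    ∀ a b : R, (∀ r : R, a * r * b ∈ P) → a ∈ P ∨ b ∈ P

/-- `c ∈ C(P)` : `c` is regular modulo `P`. -/
def regModP (R : Type*) [Ring R] (P : Submodule Rᵐᵒᵖ R) (c : R) : Prop :=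
  ∀ x : R, (c * x ∈ P → x ∈ P) ∧ (x * c ∈ P → x ∈ P)

/-- `X_m` : the set of (two-sided) prime ideals `P` with `Kdim(R/P) = m`. -/
def xSet (R : Type*) [Ring R] (m : ℕ) : Set (Submodule Rᵐᵒᵖ R) :=
  {P | isTwoSidedPrime R P ∧ kdimLE R (R ⧸ P) m ∧ ¬ kdimLE R (R ⧸ P) (m - 1)}

/-- `V_m = ⋂_{P ∈ X_m} C(P)`. -/
def vSet (R : Type*) [Ring R] (m : ℕ) : Set R :=
  {v | ∀ P ∈ xSet R m, regModP R P v}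

/-- Left multiplication by `a` as a right-module (`Rᵐᵒᵖ`-module) endomorphism of `R`. -/
def lmulHom (R : Type*) [Ring R] (a : R) : R →ₗ[Rᵐᵒᵖ] R where
  toFun x := a * x
  map_add' x y := mul_add a x y
  map_smul' r x := by
    simp [MulOpposite.smul_eq_mul_unop, mul_assoc]

/-- `Q` is a classical right quotient ring of `R` via `f : R →+* Q` :
`f` is injective, regular elements of `R` become units in `Q`, and every
element of `Q` is a right fraction `f a * (f s)⁻¹`. -/
def isRightQuotientRing (R Q : Type*) [Ring R] [Ring Q] (f : R →+* Q) : Prop :=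
  Function.Injective f ∧ (∀ s : R, regElem R s → IsUnit (f s)) ∧
    ∀ q : Q, ∃ a s : R, regElem R s ∧ q * f s = f a

/-- `R^e = {q ∈ Q | qJ ⊆ R for some J in the m-Gabriel filter}`, as a subset of `Q`. -/
def reSet (R Q : Type*) [Ring R] [Ring Q] (f : R →+* Q) (m : ℕ) : Set Q :=
  {q | ∃ J ∈ gFilt R m, ∀ j ∈ J, ∃ r : R, q * f j = f r}

/-- The extension `A·R^e` of a set `A ⊆ R` : the additive subgroup of `Q`
generated by products `f a * q` with `a ∈ A`, `q ∈ R^e` (a right ideal of `R^e`). -/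
def extSet (R Q : Type*) [Ring R] [Ring Q] (f : R →+* Q) (m : ℕ) (A : Set R) : Set Q :=
  (AddSubgroup.closure {x : Q | ∃ a ∈ A, ∃ q ∈ reSet R Q f m, x = f a * q} : Set Q)

/-- The right `R`-module structure on `Q` induced by `f : R →+* Q`. -/
def qMod (R Q : Type*) [Ring R] [Ring Q] (f : R →+* Q) : Module Rᵐᵒᵖ Q :=
  Module.compHom Q (RingHom.op f)

/-!
If `c` is a unit of `R^e` with inverse `q` and `q J ⊆ R` for some `J ∈ g`, then `J ⊆ c R`,
so `R ⧸ c R` is a quotient of `R ⧸ J` and `Kdim (R ⧸ c R) < m`.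

Conversely, let `Kdim (R ⧸ c R) < m`. In a prime right noetherian ring every nonzero right
ideal has the Krull dimension of `R`, which is `n > m - 1`. The kernel of `x ↦ c x` embeds in
`R ⧸ c ^ N R` for a Fitting exponent `N`, and if `x c = 0` then `x R` is an image of `R ⧸ c R`;
both have Krull dimension `< m`, hence vanish. So `c` is regular, hence a unit of `Q`, and
`c⁻¹ (c R) ⊆ R` puts `c⁻¹` in `R^e`.
-/

lemma devLE_of_strictMono : ∀ (k : ℕ) {A B : Type*} [PartialOrder A] [Preorder B] (g : A → B),
    StrictMono g → devLE k B → devLE k A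
  | 0, _, _, _, _, g, hg, hB => fun f hf => by
    obtain ⟨N, hN⟩ := hB (g ∘ f) (hg.monotone.comp_antitone hf)
    exact ⟨N, fun i hi => (hf i.le_succ).eq_of_not_lt fun hlt => (hg hlt).ne (hN i hi)⟩
  | k + 1, _, _, _, _, g, hg, hB => fun f hf => by
    obtain ⟨N, hN⟩ := hB (g ∘ f) (hg.monotone.comp_antitone hf)
    exact ⟨N, fun i hi => devLE_of_strictMono k
      (fun x : Set.Icc (f (i + 1)) (f i) =>
        (⟨g x, hg.monotone x.2.1, hg.monotone x.2.2⟩ : Set.Icc (g (f (i + 1))) (g (f i))))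
      (fun _ _ hxy => hg hxy) (hN i hi)⟩

lemma devLE_of_subsingleton : ∀ (k : ℕ) (A : Type*) [Preorder A] [Subsingleton A], devLE k A
  | 0, _, _, _ => fun _ _ => ⟨0, fun _ _ => Subsingleton.elim _ _⟩
  | k + 1, _, _, _ => fun _ _ => ⟨0, fun _ _ => devLE_of_subsingleton k _⟩

lemma devLE_succ {A : Type*} [PartialOrder A] {k : ℕ} (h : devLE k A) : devLE (k + 1) A :=
  fun f _ => ⟨0, fun i _ => devLE_of_strictMono k (fun x : Set.Icc (f (i + 1)) (f i) => x.1)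
    (fun _ _ hxy => hxy) h⟩

lemma devLE_mono {A : Type*} [PartialOrder A] {k k' : ℕ} (hk : k ≤ k') (h : devLE k A) :
    devLE k' A := by
  induction hk with
  | refl => exact h
  | step _ ih => exact devLE_succ ih

lemma devLE_prod : ∀ (k : ℕ) {A B : Type*} [PartialOrder A] [PartialOrder B],
    devLE k A → devLE k B → devLE k (A × B)
  | 0, _, _, _, _, hA, hB => fun f hf => by
    obtain ⟨N₁, h₁⟩ := hA (fun i => (f i).1) (fun _ _ hij => (hf hij).1)
    obtain ⟨N₂, h₂⟩ := hB (fun i => (f i).2) (fun _ _ hij => (hf hij).2)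
    exact ⟨max N₁ N₂, fun i hi =>
      Prod.ext (h₁ i (le_of_max_le_left hi)) (h₂ i (le_of_max_le_right hi))⟩
  | k + 1, _, _, _, _, hA, hB => fun f hf => by
    obtain ⟨N₁, h₁⟩ := hA (fun i => (f i).1) (fun _ _ hij => (hf hij).1)
    obtain ⟨N₂, h₂⟩ := hB (fun i => (f i).2) (fun _ _ hij => (hf hij).2)
    refine ⟨max N₁ N₂, fun i hi => devLE_of_strictMono k
      (fun x : Set.Icc (f (i + 1)) (f i) =>
        ((⟨x.1.1, x.2.1.1, x.2.2.1⟩, ⟨x.1.2, x.2.1.2, x.2.2.2⟩) :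
          Set.Icc (f (i + 1)).1 (f i).1 × Set.Icc (f (i + 1)).2 (f i).2))
      (fun _ _ hxy => hxy) (devLE_prod k (h₁ i (le_of_max_le_left hi))
        (h₂ i (le_of_max_le_right hi)))⟩

section Module

variable {S M M₂ : Type*} [Ring S] [AddCommGroup M] [Module S M] [AddCommGroup M₂] [Module S M₂]
  {k : ℕ}

open LinearMap Submodule

lemma devLE_of_subsingleton_module [Subsingleton M] : devLE k (Submodule S M) :=
  have : Subsingleton (Submodule S M) := (Submodule.subsingleton_iff S).mpr ‹_›
  devLE_of_subsingleton k _

lemma devLE_of_injective (φ : M →ₗ[S] M₂) (hφ : Function.Injective φ)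
    (h : devLE k (Submodule S M₂)) : devLE k (Submodule S M) :=
  devLE_of_strictMono k (map φ) (map_strictMono_of_injective hφ) h

lemma devLE_of_surjective (φ : M →ₗ[S] M₂) (hφ : Function.Surjective φ)
    (h : devLE k (Submodule S M)) : devLE k (Submodule S M₂) :=
  devLE_of_strictMono k (comap φ) (comap_strictMono_of_surjective hφ) h

lemma devLE_range (φ : M →ₗ[S] M₂) (h : devLE k (Submodule S M)) :
    devLE k (Submodule S (range φ)) :=
  devLE_of_surjective φ.rangeRestrict φ.surjective_rangeRestrict h

lemma devLE_of_le {A B : Submodule S M} (hAB : A ≤ B) (h : devLE k (Submodule S B)) :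
    devLE k (Submodule S A) :=
  devLE_of_injective (inclusion hAB) (inclusion_injective hAB) h

lemma devLE_map (φ : M →ₗ[S] M₂) {A : Submodule S M} (h : devLE k (Submodule S A)) :
    devLE k (Submodule S (A.map φ)) :=
  devLE_of_surjective (φ.submoduleMap A) (φ.submoduleMap_surjective A) h

/-- `C ↦ (C ⊓ N, C ⊔ N)` is strictly monotone on the modular lattice of submodules. -/
lemma devLE_of_submodule_of_quotient (N : Submodule S M) (h₁ : devLE k (Submodule S N))
    (h₂ : devLE k (Submodule S (M ⧸ N))) : devLE k (Submodule S M) := by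
  have hIic : devLE k {C : Submodule S M // C ≤ N} :=
    devLE_of_strictMono k (MapSubtype.orderIso N).symm (OrderIso.strictMono _) h₁
  have hIci : devLE k (Set.Ici N) :=
    devLE_of_strictMono k (comapMkQRelIso N).symm (OrderIso.strictMono _) h₂
  exact devLE_of_strictMono k
    (fun C => ((⟨C ⊓ N, inf_le_right⟩, ⟨C ⊔ N, (le_sup_right : N ≤ C ⊔ N)⟩) :
      {C : Submodule S M // C ≤ N} × Set.Ici N))
    (fun _ _ hCD => strictMono_inf_prod_sup hCD) (devLE_prod k hIic hIci)

lemma devLE_prod_module (h₁ : devLE k (Submodule S M)) (h₂ : devLE k (Submodule S M₂)) :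
    devLE k (Submodule S (M × M₂)) := by
  have hker : devLE k (Submodule S (ker (fst S M M₂))) := by
    rw [← range_inr]
    exact devLE_range _ h₂
  refine devLE_of_submodule_of_quotient _ hker ?_
  exact devLE_of_injective (quotKerEquivOfSurjective _ fst_surjective).toLinearMap
    (LinearEquiv.injective _) h₁

lemma devLE_quotient_inf {A B : Submodule S M} (hA : devLE k (Submodule S (M ⧸ A)))
    (hB : devLE k (Submodule S (M ⧸ B))) : devLE k (Submodule S (M ⧸ (A ⊓ B))) :=
  devLE_of_injective ((A ⊓ B).liftQ (A.mkQ.prod B.mkQ) (by simp [ker_prod]))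
    (ker_eq_bot.mp (ker_liftQ_eq_bot' _ _ (by simp [ker_prod]))) (devLE_prod_module hA hB)

lemma devLE_quotient_ker (φ : M →ₗ[S] M₂) (h : devLE k (Submodule S (range φ))) :
    devLE k (Submodule S (M ⧸ ker φ)) :=
  devLE_of_injective φ.quotKerEquivRange.toLinearMap (LinearEquiv.injective _) h

/-- `M ⧸ f^(j+1) M` is an extension of `M ⧸ f^j M` by `f^j M ⧸ f^(j+1) M`, an image of
`M ⧸ f M`. -/
lemma devLE_quotient_range_pow (f : Module.End S M) (h : devLE k (Submodule S (M ⧸ range f))) :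
    ∀ j, devLE k (Submodule S (M ⧸ range (f ^ j)))
  | 0 => by
    have : Subsingleton (M ⧸ range (f ^ 0)) := by
      rw [pow_zero, Module.End.one_eq_id, range_id]
      infer_instance
    exact devLE_of_subsingleton_module
  | j + 1 => by
    have hle : range (f ^ (j + 1)) ≤ range (f ^ j) := by
      rw [pow_succ, Module.End.mul_eq_comp]
      exact range_comp_le_range _ _
    have hker : range f ≤ ker ((range (f ^ (j + 1))).mkQ ∘ₗ f ^ j) := by
      rintro _ ⟨x, rfl⟩
      simp [← Module.End.mul_apply, ← pow_succ]
    have himage : devLE k (Submodule S ((range (f ^ j)).map (range (f ^ (j + 1))).mkQ)) := by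
      rw [← range_comp, ← range_liftQ (range f) _ hker]
      exact devLE_range _ h
    exact devLE_of_submodule_of_quotient _ himage <| devLE_of_injective
      (quotientQuotientEquivQuotient _ _ hle).toLinearMap (LinearEquiv.injective _)
      (devLE_quotient_range_pow f h j)

lemma disjoint_sup_range_inf_ker {W A : Submodule S M} (hWA : Disjoint W A)
    {φ : Module.End S M} (hφA : range φ ≤ A) (hφ : Disjoint (ker φ) (range φ)) :
    Disjoint (W ⊔ range φ) (A ⊓ ker φ) := by
  rw [disjoint_def]
  rintro _ hy ⟨hyA, hyker⟩
  obtain ⟨w, hw, _, ⟨u, rfl⟩, rfl⟩ := mem_sup.mp hy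
  have hw0 : w = 0 := disjoint_def.mp hWA w hw <| by
    simpa using A.sub_mem hyA (hφA ⟨u, rfl⟩)
  subst hw0
  rw [zero_add] at hyker ⊢
  exact disjoint_def.mp hφ _ hyker ⟨u, rfl⟩

end Module

section RightIdeals

variable {R : Type*} [Ring R]

open LinearMap

@[simp]
lemma lmulHom_apply (a x : R) : lmulHom R a x = a * x := rfl

lemma lmulHom_mul (a b : R) : lmulHom R (a * b) = lmulHom R a ∘ₗ lmulHom R b :=
  LinearMap.ext fun x => mul_assoc a b x

lemma lmulHom_pow (a : R) : ∀ n : ℕ, lmulHom R (a ^ n) = lmulHom R a ^ n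
  | 0 => LinearMap.ext fun x => by simp
  | n + 1 => by rw [pow_succ, lmulHom_mul, lmulHom_pow a n, pow_succ, Module.End.mul_eq_comp]

lemma range_lmulHom (a : R) : range (lmulHom R a) = Submodule.span Rᵐᵒᵖ {a} := by
  ext x
  simp [Submodule.mem_span_singleton, MulOpposite.op_surjective.exists]

lemma mul_mem_rightIdeal {J : Submodule Rᵐᵒᵖ R} {x : R} (hx : x ∈ J) (s : R) : x * s ∈ J :=
  J.smul_mem (MulOpposite.op s) hx

lemma range_lmulHom_le {J : Submodule Rᵐᵒᵖ R} {a : R} (ha : a ∈ J) : range (lmulHom R a) ≤ J := by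
  rintro _ ⟨s, rfl⟩
  exact mul_mem_rightIdeal ha s

end RightIdeals

section PrimeRing

variable {R : Type*} [Ring R] [IsNoetherian Rᵐᵒᵖ R]
  (hprime : ∀ a b : R, (∀ r : R, a * r * b = 0) → a = 0 ∨ b = 0)

open LinearMap

include hprime

/-- Choose `a ∈ J` with maximal right annihilator; if some `a * s` were nilpotent with
`a * s * a ≠ 0`, maximality would keep every `(a * s) ^ j * a` nonzero. -/
lemma exists_not_isNilpotent_of_ne_bot {J : Submodule Rᵐᵒᵖ R} (hJ : J ≠ ⊥) :
    ∃ x ∈ J, ¬ IsNilpotent x := by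
  by_contra! hnil
  obtain ⟨a₀, ha₀J, ha₀⟩ := Submodule.exists_mem_ne_zero_of_ne_bot hJ
  obtain ⟨_, ⟨a, haJ, ha, rfl⟩, hmax⟩ := set_has_maximal_iff_noetherian.mpr inferInstance
    {K | ∃ x ∈ J, x ≠ 0 ∧ K = ker (lmulHom R x)} ⟨_, a₀, ha₀J, ha₀, rfl⟩
  suffices h : ∀ s, a * s * a = 0 from ha ((hprime a a h).elim id id)
  intro s
  by_contra hasa
  have hpow : ∀ j : ℕ, (a * s) ^ j * a ≠ 0 := by
    intro j
    induction j with
    | zero => simpa using ha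
    | succ j ih =>
      intro hzero
      have hmemJ : (a * s) ^ j * a ∈ J := by
        have hsemi : SemiconjBy a (s * a) (a * s) := (mul_assoc a s a).symm
        rw [← hsemi.pow_right j]
        exact mul_mem_rightIdeal haJ _
      have hker : ker (lmulHom R a) = ker (lmulHom R ((a * s) ^ j * a)) := by
        have hle : ker (lmulHom R a) ≤ ker (lmulHom R ((a * s) ^ j * a)) := fun u hu => by
          simp_all [mul_assoc]
        exact hle.eq_of_not_lt (hmax _ ⟨_, hmemJ, ih, rfl⟩)
      have : s * a ∈ ker (lmulHom R ((a * s) ^ j * a)) := by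
        simpa [pow_succ, mul_assoc] using hzero
      rw [← hker] at this
      exact hasa (by simpa [mul_assoc] using this)
  obtain ⟨p, hp⟩ := hnil (a * s) (mul_mem_rightIdeal haJ s)
  exact hpow p (by rw [hp, zero_mul])

lemma exists_disjoint_ker_range_of_ne_bot {J : Submodule Rᵐᵒᵖ R} (hJ : J ≠ ⊥) :
    ∃ b ∈ J, b ≠ 0 ∧ Disjoint (ker (lmulHom R b)) (range (lmulHom R b)) := by
  obtain ⟨x, hxJ, hx⟩ := exists_not_isNilpotent_of_ne_bot hprime hJ
  obtain ⟨n, hn, hn₁⟩ := ((Module.End.eventually_disjoint_ker_pow_range_pow (lmulHom R x)).and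
    (Filter.eventually_ge_atTop 1)).exists
  refine ⟨x ^ n, ?_, fun h => hx ⟨n, h⟩, by rwa [lmulHom_pow]⟩
  obtain ⟨j, rfl⟩ := Nat.exists_eq_add_of_le' hn₁
  rw [pow_succ']
  exact mul_mem_rightIdeal hxJ _

/-- By primeness `A` contains some `d r a ≠ 0` with `a ∈ I`; take a Fitting element of
`d r a R`. -/
lemma exists_disjoint_ker_range_devLE {k : ℕ} {I : Submodule Rᵐᵒᵖ R} (hI : I ≠ ⊥)
    (hIk : devLE k (Submodule Rᵐᵒᵖ I)) {A : Submodule Rᵐᵒᵖ R} (hA : A ≠ ⊥) :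
    ∃ b ∈ A, b ≠ 0 ∧ Disjoint (ker (lmulHom R b)) (range (lmulHom R b)) ∧
      devLE k (Submodule Rᵐᵒᵖ (range (lmulHom R b))) := by
  obtain ⟨d, hdA, hd⟩ := Submodule.exists_mem_ne_zero_of_ne_bot hA
  obtain ⟨a, haI, ha⟩ := Submodule.exists_mem_ne_zero_of_ne_bot hI
  obtain ⟨r, hr⟩ : ∃ r, d * r * a ≠ 0 := by
    by_contra! h
    exact (hprime d a h).elim hd ha
  set x := d * r * a
  have hxA : x ∈ A := by simpa only [x, mul_assoc] using mul_mem_rightIdeal hdA (r * a)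
  have hxk : devLE k (Submodule Rᵐᵒᵖ (range (lmulHom R x))) := by
    rw [lmulHom_mul, range_comp]
    exact devLE_map _ (devLE_of_le (range_lmulHom_le haI) hIk)
  have hx0 : range (lmulHom R x) ≠ ⊥ := (Submodule.ne_bot_iff _).mpr ⟨x, ⟨1, mul_one x⟩, hr⟩
  obtain ⟨b, ⟨s, rfl⟩, hb, hbfit⟩ := exists_disjoint_ker_range_of_ne_bot hprime hx0
  refine ⟨x * s, mul_mem_rightIdeal hxA s, hb, hbfit, devLE_of_le ?_ hxk⟩
  rw [lmulHom_mul]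
  exact range_comp_le_range _ _

/-- Take `W` maximal among right ideals admitting `A` with `W ⊓ A = 0` and `R ⧸ A` of deviation
`≤ k`. If `A ≠ 0`, adjoining a Fitting element `b ∈ A` (and replacing `A` by `A ∩ ann b`)
enlarges `W`; so `A = 0` and `R ≅ R ⧸ A`. -/
theorem devLE_of_devLE_rightIdeal {k : ℕ} {I : Submodule Rᵐᵒᵖ R} (hI : I ≠ ⊥)
    (hIk : devLE k (Submodule Rᵐᵒᵖ I)) : devLE k (Submodule Rᵐᵒᵖ R) := by
  obtain ⟨W, ⟨A, hWA, hA⟩, hmax⟩ := set_has_maximal_iff_noetherian.mpr inferInstance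
    {W : Submodule Rᵐᵒᵖ R | ∃ A, Disjoint W A ∧ devLE k (Submodule Rᵐᵒᵖ (R ⧸ A))}
    ⟨⊥, ⊤, disjoint_bot_left, devLE_of_subsingleton_module⟩
  obtain rfl : A = ⊥ := by
    by_contra hA0
    obtain ⟨b, hbA, hb0, hbfit, hbk⟩ :=
      exists_disjoint_ker_range_devLE hprime hI hIk hA0
    refine hmax (W ⊔ range (lmulHom R b))
      ⟨_, disjoint_sup_range_inf_ker hWA (range_lmulHom_le hbA) hbfit,
        devLE_quotient_inf hA (devLE_quotient_ker _ hbk)⟩ (lt_of_le_of_ne le_sup_left ?_)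
    intro hW
    have hbW : b ∈ W := hW ▸ Submodule.mem_sup_right ⟨1, mul_one b⟩
    exact hb0 (Submodule.disjoint_def.mp hWA b hbW hbA)
  exact devLE_of_injective (Submodule.quotEquivOfEqBot ⊥ rfl).symm.toLinearMap
    (LinearEquiv.injective _) hA

/-- `ker c` embeds in `R ⧸ c ^ N R` for a Fitting exponent `N`, and `R ⧸ c R` maps onto `x R`
when `x c = 0`; a nonzero right ideal of small deviation is impossible. -/
lemma regElem_of_devLE_quotient {k : ℕ} {c : R}
    (hc : devLE k (Submodule Rᵐᵒᵖ (R ⧸ range (lmulHom R c))))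
    (hR : ¬ devLE k (Submodule Rᵐᵒᵖ R)) : regElem R c := by
  constructor
  · intro x hx
    obtain ⟨N, hN, hN₁⟩ := ((Module.End.eventually_disjoint_ker_pow_range_pow (lmulHom R c)).and
      (Filter.eventually_ge_atTop 1)).exists
    have hker : devLE k (Submodule Rᵐᵒᵖ (ker (lmulHom R c ^ N))) := by
      refine devLE_of_injective ((range (lmulHom R c ^ N)).mkQ ∘ₗ (ker _).subtype) ?_
        (devLE_quotient_range_pow _ hc N)
      rw [← ker_eq_bot, ker_comp, Submodule.ker_mkQ, ← Submodule.disjoint_iff_comap_eq_bot]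
      exact hN
    have hbot : ker (lmulHom R c ^ N) = ⊥ := by
      by_contra hne
      exact hR (devLE_of_devLE_rightIdeal hprime hne hker)
    obtain ⟨j, rfl⟩ := Nat.exists_eq_add_of_le' hN₁
    have hxker : x ∈ ker (lmulHom R c ^ (j + 1)) := by
      simp [pow_succ, Module.End.mul_apply, hx]
    simpa [hbot] using hxker
  · intro x hx
    by_contra hx0
    have hle : range (lmulHom R c) ≤ ker (lmulHom R x) := by
      rintro _ ⟨u, rfl⟩
      simp [← mul_assoc, hx]
    have hxk : devLE k (Submodule Rᵐᵒᵖ (range (lmulHom R x))) := by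
      rw [← Submodule.range_liftQ _ _ hle]
      exact devLE_range _ hc
    exact hR (devLE_of_devLE_rightIdeal hprime
      ((Submodule.ne_bot_iff (range (lmulHom R x))).mpr ⟨x, ⟨1, mul_one x⟩, hx0⟩) hxk)

end PrimeRing

theorem stmt11_general (R : Type) [Ring R] [IsNoetherian Rᵐᵒᵖ R]
    (hprime : ∀ a b : R, (∀ r : R, a * r * b = 0) → a = 0 ∨ b = 0)
    (n m : ℕ) (hmn : m < n)
    (hdim : kdimLE R R n ∧ ¬ kdimLE R R (n - 1))
    (Q : Type) [Ring Q] (f : R →+* Q) (hQ : isRightQuotientRing R Q f) :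
    ∀ c : R, (∃ q ∈ reSet R Q f m, f c * q = 1 ∧ q * f c = 1) ↔ c ∈ rCm R m := by
  intro c
  rw [rCm, Set.mem_ofPred_eq, kdimLE, ← range_lmulHom]
  constructor
  · rintro ⟨q, ⟨J, hJ, hJq⟩, hcq, -⟩
    refine devLE_of_surjective (Submodule.factor fun j hj => ?_) (Submodule.factor_surjective _) hJ
    obtain ⟨r, hr⟩ := hJq j hj
    exact ⟨r, hQ.1 (by rw [lmulHom_apply, map_mul, ← hr, ← mul_assoc, hcq, one_mul])⟩
  · intro hc
    have hR : ¬ devLE (m - 1) (Submodule Rᵐᵒᵖ R) := fun h => hdim.2 (devLE_mono (by omega) h)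
    obtain ⟨u, hu⟩ := hQ.2.1 c (regElem_of_devLE_quotient hprime hc hR)
    refine ⟨↑u⁻¹, ⟨_, hc, ?_⟩, by rw [← hu, Units.mul_inv], by rw [← hu, Units.inv_mul]⟩
    rintro _ ⟨r, rfl⟩
    exact ⟨r, by rw [lmulHom_apply, map_mul, ← mul_assoc, ← hu, Units.inv_mul, one_mul]⟩

theorem stmt11 (R : Type) [Ring R] [Nontrivial R] [IsNoetherian Rᵐᵒᵖ R]
    (hprime : ∀ a b : R, (∀ r : R, a * r * b = 0) → a = 0 ∨ b = 0)
    (n m : ℕ) (hm : 0 < m) (hmn : m < n)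
    (hdim : kdimLE R R n ∧ ¬ kdimLE R R (n - 1))
    (Q : Type) [Ring Q] (f : R →+* Q) (hQ : isRightQuotientRing R Q f) :
    ∀ c : R, (∃ q ∈ reSet R Q f m, f c * q = 1 ∧ q * f c = 1) ↔ c ∈ rCm R m :=
  stmt11_general R hprime n m hmn hdim Q f hQ
end

section
/- If u ∈ R is a unit of R^e, then Kdim(R/uR) < m, i.e., u ∈ C_m. -/
set_option linter.unusedVariables false

/-!
Since `u` is invertible in `R^e`, its inverse `q` satisfies `qJ ⊆ R` for some right ideal `J`
with `Kdim(R/J) < m`. Every `j ∈ J` is then `u (q j) ∈ uR`, so `J ⊆ uR`, and `R/uR` is a quotient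
of `R/J`. Krull dimension does not grow under quotients, because the submodule lattice of a
quotient order-embeds (by pulling back) into that of the module, and deviation is inherited along
order embeddings.
-/

def OrderEmbedding.restrictIcc {A B : Type*} [Preorder A] [Preorder B] (e : A ↪o B) (a b : A) :
    Set.Icc a b ↪o Set.Icc (e a) (e b) where
  toFun x := ⟨e x, e.monotone x.2.1, e.monotone x.2.2⟩
  inj' _ _ h := Subtype.ext (e.injective (congrArg Subtype.val h))
  map_rel_iff' := e.map_rel_iff

theorem devLE_of_orderEmbedding : ∀ (k : ℕ) {A B : Type*} [Preorder A] [Preorder B],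
    (A ↪o B) → devLE k B → devLE k A
  | 0, _, _, _, _, e, h => fun f hf => by
      obtain ⟨N, hN⟩ := h (e ∘ f) (e.monotone.comp_antitone hf)
      exact ⟨N, fun i hi => e.injective (hN i hi)⟩
  | k + 1, _, _, _, _, e, h => fun f hf => by
      obtain ⟨N, hN⟩ := h (e ∘ f) (e.monotone.comp_antitone hf)
      exact ⟨N, fun i hi => devLE_of_orderEmbedding k (e.restrictIcc _ _) (hN i hi)⟩

section KrullDimension

variable {R M N : Type*} [Ring R] [AddCommGroup M] [Module Rᵐᵒᵖ M]
  [AddCommGroup N] [Module Rᵐᵒᵖ N] {k : ℕ}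

theorem kdimLE_of_surjective {g : M →ₗ[Rᵐᵒᵖ] N} (hg : Function.Surjective g)
    (h : kdimLE R M k) : kdimLE R N k :=
  devLE_of_orderEmbedding k
    (OrderEmbedding.ofMapLEIff (Submodule.comap g)
      fun _ _ => Submodule.comap_le_comap_iff_of_surjective hg) h

theorem kdimLE_quotient_of_le {J I : Submodule Rᵐᵒᵖ M} (hJI : J ≤ I)
    (h : kdimLE R (M ⧸ J) k) : kdimLE R (M ⧸ I) k :=
  kdimLE_of_surjective (Submodule.factor_surjective hJI) h

end KrullDimension

theorem le_span_singleton_of_mul_eq_one {R Q : Type*} [Ring R] [Ring Q] {f : R →+* Q}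
    (hf : Function.Injective f) {u : R} {q : Q} (huq : f u * q = 1)
    {J : Submodule Rᵐᵒᵖ R} (hJq : ∀ j ∈ J, ∃ r : R, q * f j = f r) :
    J ≤ Submodule.span Rᵐᵒᵖ {u} := by
  intro j hj
  obtain ⟨r, hr⟩ := hJq j hj
  have hj_eq : j = u * r := hf <| by
    calc f j = f u * q * f j := by rw [huq, one_mul]
      _ = f (u * r) := by rw [mul_assoc, hr, map_mul]
  exact Submodule.mem_span_singleton.mpr ⟨MulOpposite.op r, hj_eq.symm⟩

theorem stmt12_general (R : Type) [Ring R]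
    (m : ℕ)
    (Q : Type) [Ring Q] (f : R →+* Q) (hQ : isRightQuotientRing R Q f) :
    ∀ u : R, (∃ q ∈ reSet R Q f m, f u * q = 1 ∧ q * f u = 1) → u ∈ rCm R m := by
  rintro u ⟨q, ⟨J, hJ, hJq⟩, huq, -⟩
  exact kdimLE_quotient_of_le (le_span_singleton_of_mul_eq_one hQ.1 huq hJq) hJ

theorem stmt12 (R : Type) [Ring R] [Nontrivial R] [IsNoetherian Rᵐᵒᵖ R]
    (hprime : ∀ a b : R, (∀ r : R, a * r * b = 0) → a = 0 ∨ b = 0)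
    (n m : ℕ) (hm : 0 < m) (hmn : m < n)
    (hdim : kdimLE R R n ∧ ¬ kdimLE R R (n - 1))
    (Q : Type) [Ring Q] (f : R →+* Q) (hQ : isRightQuotientRing R Q f) :
    ∀ u : R, (∃ q ∈ reSet R Q f m, f u * q = 1 ∧ q * f u = 1) → u ∈ rCm R m :=
  stmt12_general R m Q f hQ
end
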